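/- Let u be a utility function assigning a nonnegative real u(S,E) to each subset S of projects and budgeting scenario E, satisfying u(∅,E)=0, cost consistency (for every E there is k>0 with u({a},E)=k·c(a) for all projects a), and the strong effect of positive synergies (for every E and every S with |S|≥2 such that each voter approves either all of S or none of S and some voter approves all of S, u(S,E) > Σ_{a∈S} u({a},E)). Consider E=(A,V,c,l) with A={x_1,x_2,x_3,x_4,y}, c(x_1)=c(x_2)=c(x_3)=c(x_4)=2, c(y)=6, l=10, and two voters: voter 1 approves {x_1,x_2,x_3,x_4} and voter 2 approves {y}. Then: (i) every min-optimal (and every prod-optimal) feasible bundle of E is of the form {y,x_i,x_j} for some pair i≠j; and (ii) for any such pair, in the merged scenario E' where x_i and x_j are replaced by a single project X of cost 4 approved exactly by voter 1, the project X belongs to no min-optimal (resp. no prod-optimal) feasible bundle of E'. Hence the maximin and product rules based on u violate merging monotonicity. -/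
import Mathlib


open Finset

/-- A participatory budgeting scenario `E = (A, V, c, l)`. -/
structure Scenario (α ι : Type*) [DecidableEq α] where
  projects : Finset α
  voters : Finset ι
  voters_nonempty : voters.Nonempty
  cost : α → ℕ
  budget : ℕ
  approval : ι → Finset α
  approval_subset : ∀ i ∈ voters, approval i ⊆ projects
  approval_feasible : ∀ i ∈ voters, ∑ a ∈ approval i, cost a ≤ budget

variable {α ι : Type*} [DecidableEq α]

/-- A bundle is feasible if it consists of projects and fits in the budget. -/
def Feasible (E : Scenario α ι) (B : Finset α) : Prop :=
  B ⊆ E.projects ∧ ∑ a ∈ B, E.cost a ≤ E.budget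

/-- The minimum over all voters of the satisfaction `u (Aᵢ ∩ B)`. -/
noncomputable def minScore (E : Scenario α ι) (u : Finset α → ℝ) (B : Finset α) : ℝ :=
  E.voters.inf' E.voters_nonempty (fun i => u (E.approval i ∩ B))

/-- A feasible bundle maximizing the minimum of voters' satisfactions. -/
def IsMinOptimal (E : Scenario α ι) (u : Finset α → ℝ) (B : Finset α) : Prop :=
  Feasible E B ∧ ∀ C, Feasible E C → minScore E u C ≤ minScore E u B

/-- The product over all voters of the satisfaction `u (Aᵢ ∩ B)`. -/
noncomputable def prodScore (E : Scenario α ι) (u : Finset α → ℝ) (B : Finset α) : ℝ :=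
  ∏ i ∈ E.voters, u (E.approval i ∩ B)

/-- A feasible bundle maximizing the product of voters' satisfactions. -/
def IsProdOptimal (E : Scenario α ι) (u : Finset α → ℝ) (B : Finset α) : Prop :=
  Feasible E B ∧ ∀ C, Feasible E C → prodScore E u C ≤ prodScore E u B

/-- The scenario `E`: projects `x₁,…,x₄ = 0,…,3` of cost `2` each and `y = 4` of cost `6`,
budget `10`; voter `0` approves `{x₁,x₂,x₃,x₄}` and voter `1` approves `{y}`.
(Index `5` is reserved for the merged project `X`, of cost `4`.) -/
def Emerge2 : Scenario (Fin 6) (Fin 2) where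
  projects := {0, 1, 2, 3, 4}
  voters := Finset.univ
  voters_nonempty := ⟨0, Finset.mem_univ 0⟩
  cost := ![2, 2, 2, 2, 6, 4]
  budget := 10
  approval := fun i => if i = 0 then {0, 1, 2, 3} else {4}
  approval_subset := by decide
  approval_feasible := by decide

section Helpers

variable {α ι : Type*} [DecidableEq α]

lemma minScore_le'' (E : Scenario α ι) (f : Finset α → ℝ) (B : Finset α)
    (w : ι) (hw : w ∈ E.voters) : minScore E f B ≤ f (E.approval w ∩ B) :=
  Finset.inf'_le _ hw

lemma minScore_two (E : Scenario α (Fin 2)) (hv : E.voters = Finset.univ)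
    (f : Finset α → ℝ) (B : Finset α) :
    minScore E f B = min (f (E.approval 0 ∩ B)) (f (E.approval 1 ∩ B)) := by
  apply le_antisymm
  · exact le_min (minScore_le'' E f B 0 (by rw [hv]; exact Finset.mem_univ 0))
      (minScore_le'' E f B 1 (by rw [hv]; exact Finset.mem_univ 1))
  · apply Finset.le_inf'
    intro i hi
    fin_cases i
    · exact min_le_left _ _
    · exact min_le_right _ _

lemma prodScore_two (E : Scenario α (Fin 2)) (hv : E.voters = Finset.univ)
    (f : Finset α → ℝ) (B : Finset α) :
    prodScore E f B = f (E.approval 0 ∩ B) * f (E.approval 1 ∩ B) := by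
  unfold prodScore
  rw [hv, Fin.prod_univ_two]

end Helpers

section Emerge

variable (u : Scenario (Fin 6) (Fin 2) → Finset (Fin 6) → ℝ)

/-- Classification of feasible bundles of `Emerge2`. -/
lemma emerge2_classify (B : Finset (Fin 6)) (hBsub : B ⊆ Emerge2.projects)
    (hBcost : ∑ a ∈ B, Emerge2.cost a ≤ Emerge2.budget) :
    (Emerge2.approval 1 ∩ B = ∅) ∨
    (Emerge2.approval 1 ∩ B = {4} ∧
      (Emerge2.approval 0 ∩ B = ∅ ∨
        (∃ i ∈ ({0,1,2,3} : Finset (Fin 6)), Emerge2.approval 0 ∩ B = {i}) ∨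
        (∃ i ∈ ({0,1,2,3} : Finset (Fin 6)), ∃ j ∈ ({0,1,2,3} : Finset (Fin 6)),
          i ≠ j ∧ Emerge2.approval 0 ∩ B = {i, j} ∧ B = {4, i, j}))) := by
  have hA0 : Emerge2.approval 0 = {0,1,2,3} := by decide
  have hA1 : Emerge2.approval 1 = {4} := by decide
  by_cases h4 : (4 : Fin 6) ∈ B
  · right
    refine ⟨by rw [hA1]; exact Finset.singleton_inter_of_mem h4, ?_⟩
    set T : Finset (Fin 6) := ({0,1,2,3} : Finset (Fin 6)) ∩ B with hT
    have hTsub : T ⊆ ({0,1,2,3} : Finset (Fin 6)) := Finset.inter_subset_left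
    have hA0B : Emerge2.approval 0 ∩ B = T := by rw [hA0]
    have hBeq : B = insert 4 T := by
      ext x
      constructor
      · intro hx
        have hx5 := hBsub hx
        have hx5' : x ∈ ({0,1,2,3,4} : Finset (Fin 6)) := hx5
        have : x = 0 ∨ x = 1 ∨ x = 2 ∨ x = 3 ∨ x = 4 := by
          simpa using hx5' 
        rcases this with rfl | rfl | rfl | rfl | rfl
        · exact Finset.mem_insert_of_mem (Finset.mem_inter.mpr ⟨by decide, hx⟩)
        · exact Finset.mem_insert_of_mem (Finset.mem_inter.mpr ⟨by decide, hx⟩)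
        · exact Finset.mem_insert_of_mem (Finset.mem_inter.mpr ⟨by decide, hx⟩)
        · exact Finset.mem_insert_of_mem (Finset.mem_inter.mpr ⟨by decide, hx⟩)
        · exact Finset.mem_insert_self _ _
      · intro hx
        rcases Finset.mem_insert.mp hx with rfl | hx
        · exact h4
        · exact Finset.inter_subset_right hx
    have h4T : (4 : Fin 6) ∉ T := fun h =>
      (by decide : (4:Fin 6) ∉ ({0,1,2,3} : Finset (Fin 6))) (hTsub h)
    have hcostT : ∑ a ∈ T, Emerge2.cost a = 2 * T.card := by
      rw [Finset.sum_congr rfl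
        (fun x hx => (by decide : ∀ x ∈ ({0,1,2,3}:Finset (Fin 6)), Emerge2.cost x = 2)
          x (hTsub hx)),
        Finset.sum_const, smul_eq_mul, mul_comm]
    have hcard : T.card ≤ 2 := by
      rw [hBeq, Finset.sum_insert h4T, hcostT,
        (by decide : Emerge2.cost 4 = 6), (by rfl : Emerge2.budget = 10)] at hBcost
      omega
    have hcases : T.card = 0 ∨ T.card = 1 ∨ T.card = 2 := by omega
    rcases hcases with hc | hc | hc
    · left
      rw [hA0B, Finset.card_eq_zero.mp hc]
    · right; left
      obtain ⟨i, hi⟩ := Finset.card_eq_one.mp hc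
      refine ⟨i, ?_, by rw [hA0B, hi]⟩
      exact hTsub (hi ▸ Finset.mem_singleton_self i)
    · right; right
      obtain ⟨i, j, hij, hT2⟩ := Finset.card_eq_two.mp hc
      refine ⟨i, ?_, j, ?_, hij, by rw [hA0B, hT2], ?_⟩
      · exact hTsub (hT2 ▸ Finset.mem_insert_self i {j})
      · exact hTsub (hT2 ▸ Finset.mem_insert_of_mem (Finset.mem_singleton_self j))
      · rw [hBeq, hT2]
  · left
    rw [hA1]
    exact Finset.singleton_inter_of_notMem h4

lemma emerge2_main
    (hzero : ∀ E, u E ∅ = 0)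
    (hnonneg : ∀ E S, 0 ≤ u E S)
    (hcc : ∀ E : Scenario (Fin 6) (Fin 2),
      ∃ k : ℝ, 0 < k ∧ ∀ a ∈ E.projects, u E {a} = k * E.cost a)
    (hsyn : ∀ (E : Scenario (Fin 6) (Fin 2)) (S : Finset (Fin 6)),
      S ⊆ E.projects → 2 ≤ S.card →
      (∀ i ∈ E.voters, S ⊆ E.approval i ∨ S ∩ E.approval i = ∅) →
      (∃ k ∈ E.voters, S ⊆ E.approval k) →
      (∑ a ∈ S, u E {a}) < u E S) :
    (∀ B, IsMinOptimal Emerge2 (u Emerge2) B →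
        ∃ i ∈ ({0, 1, 2, 3} : Finset (Fin 6)), ∃ j ∈ ({0, 1, 2, 3} : Finset (Fin 6)),
          i ≠ j ∧ B = {4, i, j}) ∧
      (∀ B, IsProdOptimal Emerge2 (u Emerge2) B →
        ∃ i ∈ ({0, 1, 2, 3} : Finset (Fin 6)), ∃ j ∈ ({0, 1, 2, 3} : Finset (Fin 6)),
          i ≠ j ∧ B = {4, i, j}) := by
  obtain ⟨k, hk, hku⟩ := hcc Emerge2
  have hv : Emerge2.voters = Finset.univ := rfl
  have hA0 : Emerge2.approval 0 = {0,1,2,3} := by decide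
  have hA1 : Emerge2.approval 1 = {4} := by decide
  have hu4 : u Emerge2 {4} = 6 * k := by
    rw [hku 4 (by decide), (by decide : Emerge2.cost 4 = 6)]
    push_cast; ring
  have hux : ∀ x ∈ ({0,1,2,3} : Finset (Fin 6)), u Emerge2 {x} = 2 * k := by
    intro x hx
    rw [hku x ((by decide : ∀ x ∈ ({0,1,2,3}:Finset (Fin 6)), x ∈ Emerge2.projects) x hx),
      (by decide : ∀ x ∈ ({0,1,2,3}:Finset (Fin 6)), Emerge2.cost x = 2) x hx]
    push_cast; ring
  have hpair : ∀ i ∈ ({0,1,2,3} : Finset (Fin 6)), ∀ j ∈ ({0,1,2,3} : Finset (Fin 6)),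
      i ≠ j → 4 * k < u Emerge2 {i, j} := by
    intro i hi j hj hij
    have hsubA0 : ({i, j} : Finset (Fin 6)) ⊆ Emerge2.approval 0 := by
      rw [hA0]
      exact Finset.insert_subset hi (Finset.singleton_subset_iff.mpr hj)
    have h := hsyn Emerge2 {i, j}
      (hsubA0.trans (Emerge2.approval_subset 0 (Finset.mem_univ 0)))
      (le_of_eq (Finset.card_pair hij).symm)
      ?_ ⟨0, Finset.mem_univ 0, hsubA0⟩
    · rw [Finset.sum_pair hij, hux i hi, hux j hj] at h
      linarith
    · intro v _
      match v with
      | 0 => exact Or.inl hsubA0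
      | 1 =>
        right
        rw [hA1]
        apply Finset.inter_singleton_of_notMem
        intro hmem
        rcases Finset.mem_insert.mp hmem with h' | h'
        · exact (by decide : ∀ x ∈ ({0,1,2,3}:Finset (Fin 6)), x ≠ 4) i hi h'.symm
        · exact (by decide : ∀ x ∈ ({0,1,2,3}:Finset (Fin 6)), x ≠ 4) j hj
            (Finset.mem_singleton.mp h').symm
  have hGfeas : Feasible Emerge2 ({4, 0, 1} : Finset (Fin 6)) := ⟨by decide, by decide⟩
  have hG01 : 4 * k < u Emerge2 {0, 1} := hpair 0 (by decide) 1 (by decide) (by decide)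
  have hI0G : Emerge2.approval 0 ∩ ({4,0,1} : Finset (Fin 6)) = {0, 1} := by decide
  have hI1G : Emerge2.approval 1 ∩ ({4,0,1} : Finset (Fin 6)) = {4} := by decide
  constructor
  · rintro B ⟨⟨hBsub, hBcost⟩, hopt⟩
    have hGmin : minScore Emerge2 (u Emerge2) {4,0,1} = min (u Emerge2 {0,1}) (6*k) := by
      rw [minScore_two Emerge2 hv, hI0G, hI1G, hu4]
    have hlow : 4 * k < minScore Emerge2 (u Emerge2) B := by
      have := hopt _ hGfeas
      rw [hGmin] at this
      exact lt_of_lt_of_le (lt_min hG01 (by linarith)) this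
    rcases emerge2_classify B hBsub hBcost with h | ⟨h1B, h | ⟨i, hi, hiB⟩ | ⟨i, hi, j, hj, hij, _, hBeq⟩⟩
    · have := minScore_le'' Emerge2 (u Emerge2) B 1 (Finset.mem_univ 1)
      rw [h, hzero] at this
      linarith
    · have := minScore_le'' Emerge2 (u Emerge2) B 0 (Finset.mem_univ 0)
      rw [h, hzero] at this
      linarith
    · have := minScore_le'' Emerge2 (u Emerge2) B 0 (Finset.mem_univ 0)
      rw [hiB, hux i hi] at this
      linarith
    · exact ⟨i, hi, j, hj, hij, hBeq⟩
  · rintro B ⟨⟨hBsub, hBcost⟩, hopt⟩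
    have hGprod : prodScore Emerge2 (u Emerge2) {4,0,1} = u Emerge2 {0,1} * (6*k) := by
      rw [prodScore_two Emerge2 hv, hI0G, hI1G, hu4]
    have hlow : 24 * k^2 < prodScore Emerge2 (u Emerge2) B := by
      have := hopt _ hGfeas
      rw [hGprod] at this
      nlinarith
    have hBprod : prodScore Emerge2 (u Emerge2) B
        = u Emerge2 (Emerge2.approval 0 ∩ B) * u Emerge2 (Emerge2.approval 1 ∩ B) :=
      prodScore_two Emerge2 hv _ B
    rcases emerge2_classify B hBsub hBcost with h | ⟨h1B, h | ⟨i, hi, hiB⟩ | ⟨i, hi, j, hj, hij, _, hBeq⟩⟩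
    · rw [h, hzero, mul_zero] at hBprod
      nlinarith
    · rw [h, h1B, hzero, zero_mul] at hBprod
      nlinarith
    · rw [hiB, h1B, hux i hi, hu4] at hBprod
      nlinarith
    · exact ⟨i, hi, j, hj, hij, hBeq⟩

lemma emerge2_merged
    (hzero : ∀ E, u E ∅ = 0)
    (hnonneg : ∀ E S, 0 ≤ u E S)
    (hcc : ∀ E : Scenario (Fin 6) (Fin 2),
      ∃ k : ℝ, 0 < k ∧ ∀ a ∈ E.projects, u E {a} = k * E.cost a)
    (hsyn : ∀ (E : Scenario (Fin 6) (Fin 2)) (S : Finset (Fin 6)),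
      S ⊆ E.projects → 2 ≤ S.card →
      (∀ i ∈ E.voters, S ⊆ E.approval i ∨ S ∩ E.approval i = ∅) →
      (∃ k ∈ E.voters, S ⊆ E.approval k) →
      (∑ a ∈ S, u E {a}) < u E S)
    (a b : Fin 6) (ha : a ∈ ({0,1,2,3} : Finset (Fin 6)))
    (hb : b ∈ ({0,1,2,3} : Finset (Fin 6))) (hab : a ≠ b)
    (E' : Scenario (Fin 6) (Fin 2))
    (hp : E'.projects = {a, b, 4, 5})
    (hc : E'.cost = ![2, 2, 2, 2, 6, 4])
    (hbud : E'.budget = 10)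
    (hv : E'.voters = Finset.univ)
    (h0 : E'.approval 0 = {a, b, 5})
    (h1 : E'.approval 1 = {4}) :
    (∀ B, IsMinOptimal E' (u E') B → (5 : Fin 6) ∉ B) ∧
      (∀ B, IsProdOptimal E' (u E') B → (5 : Fin 6) ∉ B) := by
  have ha4 : a ≠ 4 := (by decide : ∀ x ∈ ({0,1,2,3}:Finset (Fin 6)), x ≠ 4) a ha
  have hb4 : b ≠ 4 := (by decide : ∀ x ∈ ({0,1,2,3}:Finset (Fin 6)), x ≠ 4) b hb
  have ha5 : a ≠ 5 := (by decide : ∀ x ∈ ({0,1,2,3}:Finset (Fin 6)), x ≠ 5) a ha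
  have hb5 : b ≠ 5 := (by decide : ∀ x ∈ ({0,1,2,3}:Finset (Fin 6)), x ≠ 5) b hb
  obtain ⟨k, hk, hku⟩ := hcc E'
  have hca : E'.cost a = 2 := by
    rw [hc]; exact (by decide : ∀ x ∈ ({0,1,2,3}:Finset (Fin 6)), (![2,2,2,2,6,4] : Fin 6 → ℕ) x = 2) a ha
  have hcb : E'.cost b = 2 := by
    rw [hc]; exact (by decide : ∀ x ∈ ({0,1,2,3}:Finset (Fin 6)), (![2,2,2,2,6,4] : Fin 6 → ℕ) x = 2) b hb
  have hc4 : E'.cost 4 = 6 := by rw [hc]; decide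
  have hc5 : E'.cost 5 = 4 := by rw [hc]; decide
  have hua : u E' {a} = 2 * k := by
    rw [hku a (by rw [hp]; exact Finset.mem_insert_self a _), hca]; push_cast; ring
  have hub : u E' {b} = 2 * k := by
    rw [hku b (by rw [hp]; simp), hcb]; push_cast; ring
  have hu4 : u E' {4} = 6 * k := by
    rw [hku 4 (by rw [hp]; simp), hc4]; push_cast; ring
  have hu5 : u E' {5} = 4 * k := by
    rw [hku 5 (by rw [hp]; simp), hc5]; push_cast; ring
  have hsubA0 : ({a, b} : Finset (Fin 6)) ⊆ E'.approval 0 := by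
    rw [h0]
    exact Finset.insert_subset (by simp) (by simp)
  have hpairab : 4 * k < u E' {a, b} := by
    have h := hsyn E' {a, b}
      (hsubA0.trans (E'.approval_subset 0 (by rw [hv]; exact Finset.mem_univ 0)))
      (le_of_eq (Finset.card_pair hab).symm)
      ?_ ⟨0, by rw [hv]; exact Finset.mem_univ 0, hsubA0⟩
    · rw [Finset.sum_pair hab, hua, hub] at h
      linarith
    · intro v _
      match v with
      | 0 => exact Or.inl hsubA0
      | 1 =>
        right
        rw [h1]
        apply Finset.inter_singleton_of_notMem
        intro hmem
        rcases Finset.mem_insert.mp hmem with h' | h'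
        · exact ha4 h'.symm
        · exact hb4 (Finset.mem_singleton.mp h').symm
  have h4ab : (4 : Fin 6) ∉ ({a, b} : Finset (Fin 6)) := by
    intro hmem
    rcases Finset.mem_insert.mp hmem with h' | h'
    · exact ha4 h'.symm
    · exact hb4 (Finset.mem_singleton.mp h').symm
  have hGfeas : Feasible E' ({4, a, b} : Finset (Fin 6)) := by
    constructor
    · rw [hp]
      intro x hx
      simp only [Finset.mem_insert, Finset.mem_singleton] at hx ⊢
      tauto
    · rw [Finset.sum_insert h4ab, Finset.sum_pair hab, hca, hcb, hc4, hbud]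
      norm_num
  have hI0G : E'.approval 0 ∩ ({4, a, b} : Finset (Fin 6)) = {a, b} := by
    rw [h0]
    ext x
    simp only [Finset.mem_inter, Finset.mem_insert, Finset.mem_singleton]
    constructor
    · rintro ⟨h1', h2'⟩
      rcases h1' with rfl | rfl | rfl
      · exact Or.inl rfl
      · exact Or.inr rfl
      · rcases h2' with h' | h' | h'
        · exact absurd h' (by decide)
        · exact absurd h'.symm ha5
        · exact absurd h'.symm hb5
    · rintro (rfl | rfl)
      · exact ⟨Or.inl rfl, Or.inr (Or.inl rfl)⟩
      · exact ⟨Or.inr (Or.inl rfl), Or.inr (Or.inr rfl)⟩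
  have hI1G : E'.approval 1 ∩ ({4, a, b} : Finset (Fin 6)) = {4} := by
    rw [h1]
    exact Finset.singleton_inter_of_mem (Finset.mem_insert_self _ _)
  have hI045 : E'.approval 0 ∩ ({4, 5} : Finset (Fin 6)) = {5} := by
    rw [h0]
    ext x
    simp only [Finset.mem_inter, Finset.mem_insert, Finset.mem_singleton]
    constructor
    · rintro ⟨h1', h2'⟩
      rcases h2' with rfl | rfl
      · rcases h1' with h' | h' | h'
        · exact absurd h'.symm ha4
        · exact absurd h'.symm hb4
        · exact absurd h' (by decide)
      · rfl
    · rintro rfl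
      exact ⟨Or.inr (Or.inr rfl), Or.inr rfl⟩
  -- if `5 ∈ B` and `B` is feasible, then either `4 ∉ B` or `B = {4, 5}`
  have hBclass : ∀ B : Finset (Fin 6), B ⊆ E'.projects → ∑ x ∈ B, E'.cost x ≤ E'.budget →
      (5 : Fin 6) ∈ B → (4 : Fin 6) ∉ B ∨ B = {4, 5} := by
    intro B hBsub hBcost h5
    by_cases h4 : (4 : Fin 6) ∈ B
    · right
      have hsum45 : ∀ x : Fin 6, x ∈ ({0,1,2,3} : Finset (Fin 6)) → x ∉ B := by
        intro x hx hxB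
        have hx4 : x ≠ 4 := (by decide : ∀ y ∈ ({0,1,2,3}:Finset (Fin 6)), y ≠ 4) x hx
        have hx5 : x ≠ 5 := (by decide : ∀ y ∈ ({0,1,2,3}:Finset (Fin 6)), y ≠ 5) x hx
        have hcx : E'.cost x = 2 := by
          rw [hc]
          exact (by decide : ∀ y ∈ ({0,1,2,3}:Finset (Fin 6)), (![2,2,2,2,6,4] : Fin 6 → ℕ) y = 2) x hx
        have hss : ({x, 4, 5} : Finset (Fin 6)) ⊆ B := by
          intro y hy
          rcases Finset.mem_insert.mp hy with rfl | hy
          · exact hxB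
          rcases Finset.mem_insert.mp hy with rfl | hy
          · exact h4
          · rw [Finset.mem_singleton.mp hy]; exact h5
        have hsum := Finset.sum_le_sum_of_subset (f := E'.cost) hss
        rw [Finset.sum_insert (by simp [hx4, hx5]),
          Finset.sum_insert (by simp), Finset.sum_singleton, hcx, hc4, hc5] at hsum
        rw [hbud] at hBcost
        omega
      apply Finset.Subset.antisymm
      · intro x hx
        have hxp := hBsub hx
        rw [hp] at hxp
        simp only [Finset.mem_insert, Finset.mem_singleton] at hxp ⊢
        rcases hxp with rfl | rfl | rfl | rfl
        · exact absurd hx (hsum45 x ha)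
        · exact absurd hx (hsum45 x hb)
        · exact Or.inl rfl
        · exact Or.inr rfl
      · exact Finset.insert_subset h4 (Finset.singleton_subset_iff.mpr h5)
    · left; exact h4
  constructor
  · rintro B ⟨⟨hBsub, hBcost⟩, hopt⟩ h5
    have hGmin : minScore E' (u E') {4, a, b} = min (u E' {a, b}) (6 * k) := by
      rw [minScore_two E' hv, hI0G, hI1G, hu4]
    have hlow : 4 * k < minScore E' (u E') B := by
      have := hopt _ hGfeas
      rw [hGmin] at this
      exact lt_of_lt_of_le (lt_min hpairab (by linarith)) this
    rcases hBclass B hBsub hBcost h5 with h4 | hBeq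
    · have := minScore_le'' E' (u E') B 1 (by rw [hv]; exact Finset.mem_univ 1)
      rw [h1, Finset.singleton_inter_of_notMem h4, hzero] at this
      linarith
    · have := minScore_le'' E' (u E') B 0 (by rw [hv]; exact Finset.mem_univ 0)
      rw [hBeq] at hlow
      rw [hBeq, hI045, hu5] at this
      linarith
  · rintro B ⟨⟨hBsub, hBcost⟩, hopt⟩ h5
    have hGprod : prodScore E' (u E') {4, a, b} = u E' {a, b} * (6 * k) := by
      rw [prodScore_two E' hv, hI0G, hI1G, hu4]
    have hlow : 24 * k ^ 2 < prodScore E' (u E') B := by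
      have := hopt _ hGfeas
      rw [hGprod] at this
      nlinarith
    have hBprod : prodScore E' (u E') B
        = u E' (E'.approval 0 ∩ B) * u E' (E'.approval 1 ∩ B) :=
      prodScore_two E' hv _ B
    rcases hBclass B hBsub hBcost h5 with h4 | hBeq
    · rw [h1, Finset.singleton_inter_of_notMem h4, hzero, mul_zero] at hBprod
      nlinarith
    · rw [hBeq, hI045, h1,
        Finset.singleton_inter_of_mem (by simp : (4:Fin 6) ∈ ({4,5}:Finset (Fin 6))),
        hu5, hu4] at hBprod
      rw [hBeq] at hlow
      nlinarith

end Emerge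
/-- The maximin and product rules violate merging monotonicity under any utility function
with `u(∅,E) = 0`, nonnegativity, cost consistency and the strong effect of positive
synergies: (i) every min-optimal (resp. prod-optimal) bundle of `E` is of the form
`{y, xᵢ, xⱼ}` with `i ≠ j`; (ii) in the scenario `E'` obtained by merging `xᵢ` and `xⱼ`
into a project `X = 5` of cost `4` approved exactly by voter `0`, `X` belongs to no
min-optimal (resp. prod-optimal) bundle. -/
theorem min_prod_rules_violate_merging_monotonicity
    (u : Scenario (Fin 6) (Fin 2) → Finset (Fin 6) → ℝ)
    (hzero : ∀ E, u E ∅ = 0)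
    (hnonneg : ∀ E S, 0 ≤ u E S)
    (hcc : ∀ E : Scenario (Fin 6) (Fin 2),
      ∃ k : ℝ, 0 < k ∧ ∀ a ∈ E.projects, u E {a} = k * E.cost a)
    (hsyn : ∀ (E : Scenario (Fin 6) (Fin 2)) (S : Finset (Fin 6)),
      S ⊆ E.projects → 2 ≤ S.card →
      (∀ i ∈ E.voters, S ⊆ E.approval i ∨ S ∩ E.approval i = ∅) →
      (∃ k ∈ E.voters, S ⊆ E.approval k) →
      (∑ a ∈ S, u E {a}) < u E S) :
    ((∀ B, IsMinOptimal Emerge2 (u Emerge2) B →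
        ∃ i ∈ ({0, 1, 2, 3} : Finset (Fin 6)), ∃ j ∈ ({0, 1, 2, 3} : Finset (Fin 6)),
          i ≠ j ∧ B = {4, i, j}) ∧
      (∀ B, IsProdOptimal Emerge2 (u Emerge2) B →
        ∃ i ∈ ({0, 1, 2, 3} : Finset (Fin 6)), ∃ j ∈ ({0, 1, 2, 3} : Finset (Fin 6)),
          i ≠ j ∧ B = {4, i, j})) ∧
    (∀ i ∈ ({0, 1, 2, 3} : Finset (Fin 6)), ∀ j ∈ ({0, 1, 2, 3} : Finset (Fin 6)), i ≠ j →
      ∀ E' : Scenario (Fin 6) (Fin 2),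
        E'.projects = ((({0, 1, 2, 3} : Finset (Fin 6)) \ {i, j}) ∪ {4, 5}) →
        E'.cost = ![2, 2, 2, 2, 6, 4] →
        E'.budget = 10 →
        E'.voters = Finset.univ →
        E'.approval 0 = ((({0, 1, 2, 3} : Finset (Fin 6)) \ {i, j}) ∪ {5}) →
        E'.approval 1 = {4} →
        ((∀ B, IsMinOptimal E' (u E') B → (5 : Fin 6) ∉ B) ∧
          (∀ B, IsProdOptimal E' (u E') B → (5 : Fin 6) ∉ B))) := by
  refine ⟨emerge2_main u hzero hnonneg hcc hsyn, ?_⟩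
  intro i hi j hj hij E' hp hc hbud hv h0 h1
  fin_cases hi <;> fin_cases hj
  · exact absurd rfl hij
  · exact emerge2_merged u hzero hnonneg hcc hsyn 2 3 (by decide) (by decide)
      (by decide) E' (by rw [hp]; decide) hc hbud hv (by rw [h0]; decide) h1
  · exact emerge2_merged u hzero hnonneg hcc hsyn 1 3 (by decide) (by decide)
      (by decide) E' (by rw [hp]; decide) hc hbud hv (by rw [h0]; decide) h1
  · exact emerge2_merged u hzero hnonneg hcc hsyn 1 2 (by decide) (by decide)
      (by decide) E' (by rw [hp]; decide) hc hbud hv (by rw [h0]; decide) h1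
  · exact emerge2_merged u hzero hnonneg hcc hsyn 2 3 (by decide) (by decide)
      (by decide) E' (by rw [hp]; decide) hc hbud hv (by rw [h0]; decide) h1
  · exact absurd rfl hij
  · exact emerge2_merged u hzero hnonneg hcc hsyn 0 3 (by decide) (by decide)
      (by decide) E' (by rw [hp]; decide) hc hbud hv (by rw [h0]; decide) h1
  · exact emerge2_merged u hzero hnonneg hcc hsyn 0 2 (by decide) (by decide)
      (by decide) E' (by rw [hp]; decide) hc hbud hv (by rw [h0]; decide) h1
  · exact emerge2_merged u hzero hnonneg hcc hsyn 1 3 (by decide) (by decide)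
      (by decide) E' (by rw [hp]; decide) hc hbud hv (by rw [h0]; decide) h1
  · exact emerge2_merged u hzero hnonneg hcc hsyn 0 3 (by decide) (by decide)
      (by decide) E' (by rw [hp]; decide) hc hbud hv (by rw [h0]; decide) h1
  · exact absurd rfl hij
  · exact emerge2_merged u hzero hnonneg hcc hsyn 0 1 (by decide) (by decide)
      (by decide) E' (by rw [hp]; decide) hc hbud hv (by rw [h0]; decide) h1
  · exact emerge2_merged u hzero hnonneg hcc hsyn 1 2 (by decide) (by decide)
      (by decide) E' (by rw [hp]; decide) hc hbud hv (by rw [h0]; decide) h1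
  · exact emerge2_merged u hzero hnonneg hcc hsyn 0 2 (by decide) (by decide)
      (by decide) E' (by rw [hp]; decide) hc hbud hv (by rw [h0]; decide) h1
  · exact emerge2_merged u hzero hnonneg hcc hsyn 0 1 (by decide) (by decide)
      (by decide) E' (by rw [hp]; decide) hc hbud hv (by rw [h0]; decide) h1
  · exact absurd rfl hij
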